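/- arXiv:2410.11604 — 5 statements merged into one kernel-verified Lean document; each statement's English description precedes it below -/
import Mathlib

section
/- Let ρ be a density matrix on a finite-dimensional Hilbert space with spectral decomposition ρ = ∑_i p_i |i⟩⟨i|, and let H be a Hermitian operator. Then the SLD Fisher information F_ρ(H) := ∑_{i,j} (2(p_i - p_j)²/(p_i + p_j)) |⟨i|H|j⟩|² satisfies F_ρ(H) ≤ 4·V_ρ(H), where V_ρ(H) := Tr[ρH²] − (Tr[ρH])² is the variance. -/
open Matrix in
/-- SLD Fisher information of a Hermitian `H` in a state with spectral
decomposition `ρ = ∑ p i |i⟩⟨i|`, expressed in the eigenbasis of `ρ`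
(so that `ρ` is the diagonal matrix with entries `p i` and `⟨i|H|j⟩ = H i j`).
(Terms with `p i + p j = 0` vanish since division by zero is zero in Lean.) -/
noncomputable def sldFisher {d : ℕ} (p : Fin d → ℝ) (H : Matrix (Fin d) (Fin d) ℂ) : ℝ :=
  ∑ i, ∑ j, 2 * (p i - p j) ^ 2 / (p i + p j) * Complex.normSq (H i j)

open Matrix in
/-- Variance `V_ρ(H) = Tr[ρH²] − (Tr[ρH])²` of a Hermitian `H` in the state `ρ`. -/
noncomputable def qVar {d : ℕ} (ρ H : Matrix (Fin d) (Fin d) ℂ) : ℝ :=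
  ((ρ * H * H).trace).re - (((ρ * H).trace).re) ^ 2

open Matrix in
/-- The SLD Fisher information is at most four times the variance. -/
theorem sldFisher_le_four_mul_var {d : ℕ} (p : Fin d → ℝ)
    (hp : ∀ i, 0 ≤ p i) (hsum : ∑ i, p i = 1)
    (H : Matrix (Fin d) (Fin d) ℂ) (hH : H.IsHermitian) :
    sldFisher p H ≤ 4 * qVar (Matrix.diagonal fun i => (p i : ℂ)) H := by
  classical
  set n : Fin d → Fin d → ℝ := fun i j => Complex.normSq (H i j) with hn
  have hHsym : ∀ i j, H j i = starRingEnd ℂ (H i j) := fun i j => (hH.apply j i).symm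
  have hsymm : ∀ i j, n i j = n j i := by
    intro i j
    simp [hn, hHsym i j, Complex.normSq_conj]
  have hn0 : ∀ i j, 0 ≤ n i j := fun i j => Complex.normSq_nonneg _
  set a : Fin d → ℝ := fun i => (H i i).re with ha
  have hdiag : ∀ i, n i i = a i ^ 2 := by
    intro i
    have him : (H i i).im = 0 := by
      have := hHsym i i
      have := congrArg Complex.im this
      simp [Complex.conj_im] at this
      linarith
    simp [hn, ha, Complex.normSq_apply, him, sq]
  -- trace computations
  have htr2 : ((diagonal (fun i => (p i : ℂ)) * H * H).trace).re = ∑ i, ∑ j, p i * n i j := by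
    have : (diagonal (fun i => (p i : ℂ)) * H * H).trace
        = ∑ i, ∑ j, ((p i : ℂ) * (n i j : ℝ)) := by
      simp only [Matrix.trace, Matrix.diag]
      congr 1; ext i
      rw [Matrix.mul_apply]
      congr 1; ext j
      rw [Matrix.diagonal_mul, mul_assoc, hHsym i j, Complex.mul_conj]
    rw [this]
    simp
  have htr1 : ((diagonal (fun i => (p i : ℂ)) * H).trace).re = ∑ i, p i * a i := by
    simp [Matrix.trace, Matrix.diag, Matrix.diagonal_mul, ha]
  -- key termwise bound
  have key : ∀ i j, 2 * (p i - p j) ^ 2 / (p i + p j) * n i j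
      ≤ 2 * (p i + p j) * n i j - (if i = j then 4 * p i * n i i else 0) := by
    intro i j
    by_cases hij : i = j
    · subst hij
      simp only [sub_self, ne_eq, OfNat.ofNat_ne_zero, not_false_eq_true, zero_pow, mul_zero,
        zero_div, zero_mul, if_true, ite_true]
      have h : 2 * (p i + p i) * n i i = 4 * p i * n i i := by ring
      linarith
    · simp only [hij, if_false, sub_zero]
      rcases eq_or_lt_of_le (add_nonneg (hp i) (hp j)) with h0 | h0
      · have hpi : p i = 0 := by have := hp i; have := hp j; linarith
        have hpj : p j = 0 := by have := hp i; have := hp j; linarith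
        simp [hpi, hpj]
      · apply mul_le_mul_of_nonneg_right _ (hn0 i j)
        rw [div_le_iff₀ h0]
        have : (p i - p j) ^ 2 ≤ (p i + p j) ^ 2 := by
          nlinarith [mul_nonneg (hp i) (hp j)]
        nlinarith
  -- sum the bound
  have hsum1 : sldFisher p H ≤ (∑ i, ∑ j, 2 * (p i + p j) * n i j) - ∑ i, 4 * p i * n i i := by
    rw [sldFisher, ← Finset.sum_sub_distrib]
    apply Finset.sum_le_sum
    intro i _
    have : ∑ j, (if i = j then 4 * p i * n i i else 0) = 4 * p i * n i i := by
      simp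
    rw [← this, ← Finset.sum_sub_distrib]
    exact Finset.sum_le_sum fun j _ => key i j
  -- symmetrization
  have hsym2 : (∑ i, ∑ j, 2 * (p i + p j) * n i j) = 4 * ∑ i, ∑ j, p i * n i j := by
    have h1 : (∑ i, ∑ j, p j * n i j) = ∑ i, ∑ j, p i * n i j := by
      rw [Finset.sum_comm]
      congr 1; ext i
      congr 1; ext j
      rw [hsymm i j]
    calc (∑ i, ∑ j, 2 * (p i + p j) * n i j)
        = 2 * ((∑ i, ∑ j, p i * n i j) + ∑ i, ∑ j, p j * n i j) := by
          rw [← Finset.sum_add_distrib, Finset.mul_sum]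
          congr 1; ext i
          rw [← Finset.sum_add_distrib, Finset.mul_sum]
          congr 1; ext j
          ring
      _ = 4 * ∑ i, ∑ j, p i * n i j := by rw [h1]; ring
  -- Cauchy-Schwarz
  have hCS : (∑ i, p i * a i) ^ 2 ≤ ∑ i, p i * n i i := by
    have := Finset.sum_mul_sq_le_sq_mul_sq Finset.univ
      (fun i => Real.sqrt (p i)) (fun i => Real.sqrt (p i) * a i)
    have h1 : ∀ i, Real.sqrt (p i) * (Real.sqrt (p i) * a i) = p i * a i := by
      intro i
      rw [← mul_assoc, Real.mul_self_sqrt (hp i)]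
    have h2 : ∀ i, Real.sqrt (p i) ^ 2 = p i := fun i => Real.sq_sqrt (hp i)
    have h3 : ∀ i, (Real.sqrt (p i) * a i) ^ 2 = p i * a i ^ 2 := by
      intro i; rw [mul_pow, h2]
    simp only [h1, h2, h3, hsum, one_mul] at this
    calc (∑ i, p i * a i) ^ 2 ≤ ∑ i, p i * a i ^ 2 := this
      _ = ∑ i, p i * n i i := by
          congr 1; ext i; rw [hdiag]
  -- put together
  rw [qVar, htr2, htr1]
  have : ∑ i, 4 * p i * n i i = 4 * ∑ i, p i * n i i := by
    rw [Finset.mul_sum]; congr 1; ext i; ring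
  calc sldFisher p H ≤ (∑ i, ∑ j, 2 * (p i + p j) * n i j) - ∑ i, 4 * p i * n i i := hsum1
    _ = 4 * (∑ i, ∑ j, p i * n i j) - 4 * ∑ i, p i * n i i := by rw [hsym2, this]
    _ ≤ 4 * (∑ i, ∑ j, p i * n i j) - 4 * (∑ i, p i * a i) ^ 2 := by linarith
    _ = 4 * ((∑ i, ∑ j, p i * n i j) - (∑ i, p i * a i) ^ 2) := by ring
end

section
/- Define C_ρ(H) := V_ρ(H) − F_ρ(H)/4 (the 'classical fluctuation'). Then C_ρ(H) ≥ 0 for all density matrices ρ and Hermitian H; C_ρ(H) = 0 when ρ is pure; and C_ρ(H) = V_ρ(H) when [ρ, H] = 0. -/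
private lemma keycoef (a b : ℝ) (ha : 0 ≤ a) (hb : 0 ≤ b) :
    (a + b) / 2 - 2 * (a - b) ^ 2 / (a + b) / 4 = 2 * a * b / (a + b) := by
  rcases eq_or_lt_of_le (by positivity : (0:ℝ) ≤ a + b) with h | h
  · have ha0 : a = 0 := by linarith
    have hb0 : b = 0 := by linarith
    simp [ha0, hb0]
  · field_simp
    ring

private lemma diagcoef (a : ℝ) : 2 * a * a / (a + a) = a := by
  rcases eq_or_ne a 0 with h | h
  · simp [h]
  · rw [div_eq_iff (by intro hc; exact h (by linarith))]
    ring

open Matrix in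
/-- Classical fluctuation `C_ρ(H) := V_ρ(H) − F_ρ(H)/4` (with `ρ = diagonal p`
expressed in its eigenbasis): it is nonnegative, vanishes on pure states,
and equals the variance when `[ρ, H] = 0`. -/
theorem classical_fluctuation_properties {d : ℕ} (p : Fin d → ℝ)
    (hp : ∀ i, 0 ≤ p i) (hsum : ∑ i, p i = 1)
    (H : Matrix (Fin d) (Fin d) ℂ) (hH : H.IsHermitian) :
    0 ≤ qVar (Matrix.diagonal fun i => (p i : ℂ)) H - sldFisher p H / 4 ∧
    ((∃ k, ∀ i, p i = if i = k then 1 else 0) →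
      qVar (Matrix.diagonal fun i => (p i : ℂ)) H - sldFisher p H / 4 = 0) ∧
    (Commute (Matrix.diagonal fun i => (p i : ℂ)) H →
      qVar (Matrix.diagonal fun i => (p i : ℂ)) H - sldFisher p H / 4 =
        qVar (Matrix.diagonal fun i => (p i : ℂ)) H) := by
  set x : Fin d → ℝ := fun i => (H i i).re with hx
  have happ : ∀ i j, H j i = star (H i j) := fun i j => (hH.apply j i).symm
  have hNsymm : ∀ i j, Complex.normSq (H j i) = Complex.normSq (H i j) := by
    intro i j; rw [happ, Complex.star_def, Complex.normSq_conj]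
  have hdiag : ∀ i, (H i i : ℂ) = (x i : ℂ) := by
    intro i
    have := happ i i
    have him : (H i i).im = 0 := by
      have := congrArg Complex.im this
      simp at this; linarith
    exact Complex.ext rfl (by simp [him])
  have hNdiag : ∀ i, Complex.normSq (H i i) = x i ^ 2 := by
    intro i; rw [hdiag]; simp [Complex.normSq_ofReal, sq]
  -- trace computations
  have h1 : ((Matrix.diagonal (fun i => (p i : ℂ)) * H * H).trace).re
      = ∑ i, ∑ j, p i * Complex.normSq (H i j) := by
    rw [Matrix.mul_assoc, Matrix.trace]
    rw [Complex.re_sum]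
    refine Finset.sum_congr rfl fun i _ => ?_
    rw [Matrix.diag_apply, Matrix.diagonal_mul, Matrix.mul_apply]
    have : ∑ j, H i j * H j i = ((∑ j, Complex.normSq (H i j) : ℝ) : ℂ) := by
      push_cast
      refine Finset.sum_congr rfl fun j _ => ?_
      rw [happ i j, Complex.star_def, Complex.mul_conj]
    rw [this, ← Complex.ofReal_mul, Complex.ofReal_re, Finset.mul_sum]
  have h2 : ((Matrix.diagonal (fun i => (p i : ℂ)) * H).trace).re = ∑ i, p i * x i := by
    rw [Matrix.trace, Complex.re_sum]
    refine Finset.sum_congr rfl fun i _ => ?_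
    rw [Matrix.diag_apply, Matrix.diagonal_mul, hdiag i, ← Complex.ofReal_mul,
      Complex.ofReal_re]
  -- the key rewriting of C
  have hC : qVar (Matrix.diagonal fun i => (p i : ℂ)) H - sldFisher p H / 4
      = (∑ i, ∑ j, 2 * p i * p j / (p i + p j) * Complex.normSq (H i j))
        - (∑ i, p i * x i) ^ 2 := by
    rw [qVar, h1, h2, sldFisher]
    have hswap : ∑ i, ∑ j, p i * Complex.normSq (H i j)
        = ∑ i, ∑ j, p j * Complex.normSq (H i j) := by
      rw [Finset.sum_comm]
      exact Finset.sum_congr rfl fun i _ => Finset.sum_congr rfl fun j _ => by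
        rw [hNsymm]
    have hhalf : ∑ i, ∑ j, p i * Complex.normSq (H i j)
        = ∑ i, ∑ j, (p i + p j) / 2 * Complex.normSq (H i j) := by
      have := hswap
      rw [show (∑ i, ∑ j, p i * Complex.normSq (H i j))
          = ((∑ i, ∑ j, p i * Complex.normSq (H i j))
            + (∑ i, ∑ j, p j * Complex.normSq (H i j))) / 2 by rw [← hswap]; ring]
      rw [← Finset.sum_add_distrib, Finset.sum_div]
      refine Finset.sum_congr rfl fun i _ => ?_
      rw [← Finset.sum_add_distrib, Finset.sum_div]
      exact Finset.sum_congr rfl fun j _ => by ring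
    rw [hhalf]
    have : (∑ i, ∑ j, (p i + p j) / 2 * Complex.normSq (H i j))
        - (∑ i, ∑ j, 2 * (p i - p j) ^ 2 / (p i + p j) * Complex.normSq (H i j)) / 4
        = ∑ i, ∑ j, 2 * p i * p j / (p i + p j) * Complex.normSq (H i j) := by
      rw [Finset.sum_div, ← Finset.sum_sub_distrib]
      refine Finset.sum_congr rfl fun i _ => ?_
      rw [Finset.sum_div, ← Finset.sum_sub_distrib]
      refine Finset.sum_congr rfl fun j _ => ?_
      have := keycoef (p i) (p j) (hp i) (hp j)
      calc (p i + p j) / 2 * Complex.normSq (H i j)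
            - 2 * (p i - p j) ^ 2 / (p i + p j) * Complex.normSq (H i j) / 4
          = ((p i + p j) / 2 - 2 * (p i - p j) ^ 2 / (p i + p j) / 4)
              * Complex.normSq (H i j) := by ring
        _ = 2 * p i * p j / (p i + p j) * Complex.normSq (H i j) := by rw [this]
    linarith [this]
  refine ⟨?_, ?_, ?_⟩
  · -- nonnegativity
    rw [hC]
    have hdrop : ∑ i, p i * x i ^ 2
        ≤ ∑ i, ∑ j, 2 * p i * p j / (p i + p j) * Complex.normSq (H i j) := by
      refine Finset.sum_le_sum fun i _ => ?_
      have hterm : p i * x i ^ 2 = 2 * p i * p i / (p i + p i) * Complex.normSq (H i i) := by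
        rw [diagcoef (p i), hNdiag i]
      rw [hterm]
      refine Finset.single_le_sum (f := fun j => 2 * p i * p j / (p i + p j) * Complex.normSq (H i j)) (fun j _ => ?_) (Finset.mem_univ i)
      have : (0:ℝ) ≤ 2 * p i * p j / (p i + p j) :=
        div_nonneg (mul_nonneg (mul_nonneg (by norm_num) (hp i)) (hp j))
          (add_nonneg (hp i) (hp j))
      exact mul_nonneg this (Complex.normSq_nonneg _)
    have hcs : (∑ i, p i * x i) ^ 2 ≤ ∑ i, p i * x i ^ 2 := by
      have h := Finset.sum_mul_sq_le_sq_mul_sq Finset.univ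
        (fun i => Real.sqrt (p i)) (fun i => Real.sqrt (p i) * x i)
      have e1 : ∀ i : Fin d, Real.sqrt (p i) * (Real.sqrt (p i) * x i) = p i * x i := by
        intro i
        rw [← mul_assoc, Real.mul_self_sqrt (hp i)]
      have e2 : ∀ i : Fin d, Real.sqrt (p i) ^ 2 = p i := fun i => Real.sq_sqrt (hp i)
      have e3 : ∀ i : Fin d, (Real.sqrt (p i) * x i) ^ 2 = p i * x i ^ 2 := by
        intro i
        rw [mul_pow, e2]
      simp only [e1, e2, e3, hsum, one_mul] at h
      exact h
    linarith
  · -- pure state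
    rintro ⟨k, hk⟩
    rw [hC]
    have hvals : ∀ i j : Fin d, 2 * p i * p j / (p i + p j) * Complex.normSq (H i j)
        = if i = k ∧ j = k then x k ^ 2 else 0 := by
      intro i j
      by_cases hi : i = k <;> by_cases hj : j = k <;>
        simp [hk, hi, hj, hNdiag] <;> norm_num
    have hdsum : ∑ i, ∑ j, 2 * p i * p j / (p i + p j) * Complex.normSq (H i j)
        = x k ^ 2 := by
      simp only [hvals]
      rw [Finset.sum_eq_single k]
      · rw [Finset.sum_eq_single k]
        · simp
        · intro j _ hj; simp [hj]
        · simp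
      · intro i _ hi; simp [hi]
      · simp
    have hxsum : ∑ i, p i * x i = x k := by
      simp [hk, ite_mul]
    rw [hdsum, hxsum]; ring
  · -- commuting case
    intro hcomm
    have hF : sldFisher p H = 0 := by
      rw [sldFisher]
      refine Finset.sum_eq_zero fun i _ => Finset.sum_eq_zero fun j _ => ?_
      rcases eq_or_ne (p i) (p j) with hpe | hpe
      · rw [hpe]; ring
      · have h0 : ((p i : ℂ)) * H i j = H i j * ((p j : ℂ)) := by
          have := congrFun (congrFun hcomm i) j
          rwa [Matrix.diagonal_mul, Matrix.mul_diagonal] at this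
        have : H i j = 0 := by
          have hsub : ((p i : ℂ) - (p j : ℂ)) * H i j = 0 := by
            rw [sub_mul, h0]; ring
          have hne : ((p i : ℂ)) - ((p j : ℂ)) ≠ 0 := by
            rw [← Complex.ofReal_sub]
            exact Complex.ofReal_ne_zero.mpr (sub_ne_zero.mpr hpe)
          exact (mul_eq_zero.mp hsub).resolve_left hne
        rw [this]
        simp
    rw [hF]
    ring
end

section
/- Generalized Cramér–Rao inequality: let {ρ_t} be a smooth family of strictly positive density matrices, f a standard operator monotone function, A a Hermitian operator, and L the f-logarithmic derivative defined by 𝕁^f_{ρ_t}(L) = ∂ρ_t/∂t. Then |d/dt Tr[A ρ_t]| ≤ √(J^f_{ρ_t}) · √(V^f_{ρ_t}(A)), where J^f_{ρ_t} := ⟨L,L⟩^f_{ρ_t} and V^f_{ρ_t}(A) := ⟨A₀, A₀⟩^f_{ρ_t} with A₀ = A − Tr[Aρ_t]·I. -/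
open scoped ComplexOrder

/-- A standard operator monotone function `f : (0,∞) → (0,∞)`. -/
structure StdOpMonotone where
  f : ℝ → ℝ
  pos : ∀ x : ℝ, 0 < x → 0 < f x
  one : f 1 = 1
  symm : ∀ x : ℝ, 0 < x → f x = x * f x⁻¹
  opMono : ∀ (n : ℕ) (A B : Matrix (Fin n) (Fin n) ℂ)
    (hA : A.IsHermitian) (hB : B.IsHermitian),
    A.PosDef → (B - A).PosSemidef → (hB.cfc f - hA.cfc f).PosSemidef

open Matrix in
/-- `𝕁^f_ρ` acting entrywise in the eigenbasis of `ρ = diagonal p`. -/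
noncomputable def Jsup {d : ℕ} (F : StdOpMonotone) (p : Fin d → ℝ)
    (X : Matrix (Fin d) (Fin d) ℂ) : Matrix (Fin d) (Fin d) ℂ :=
  Matrix.of fun i j => ((p j * F.f (p i / p j) : ℝ) : ℂ) * X i j

open Matrix in
/-- The `f`-inner product `⟨A,B⟩^f_ρ := Tr[A† 𝕁^f_ρ(B)]`. -/
noncomputable def ipF {d : ℕ} (F : StdOpMonotone) (p : Fin d → ℝ)
    (A B : Matrix (Fin d) (Fin d) ℂ) : ℂ :=
  (Aᴴ * Jsup F p B).trace

/-- Weighted Cauchy–Schwarz for nonneg reals. -/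
lemma cs_weighted {ι : Type*} (s : Finset ι) (w a b : ι → ℝ)
    (hw : ∀ i, 0 ≤ w i) (ha : ∀ i, 0 ≤ a i) (hb : ∀ i, 0 ≤ b i) :
    ∑ i ∈ s, w i * (a i * b i) ≤
      Real.sqrt (∑ i ∈ s, w i * a i ^ 2) * Real.sqrt (∑ i ∈ s, w i * b i ^ 2) := by
  have h1 : 0 ≤ ∑ i ∈ s, w i * a i ^ 2 :=
    Finset.sum_nonneg fun i _ => mul_nonneg (hw i) (sq_nonneg _)
  have h2 : 0 ≤ ∑ i ∈ s, w i * b i ^ 2 :=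
    Finset.sum_nonneg fun i _ => mul_nonneg (hw i) (sq_nonneg _)
  rw [← Real.sqrt_mul h1]
  rw [Real.le_sqrt (Finset.sum_nonneg fun i _ =>
      mul_nonneg (hw i) (mul_nonneg (ha i) (hb i))) (mul_nonneg h1 h2)]
  have key := Finset.sum_mul_sq_le_sq_mul_sq s
    (fun i => Real.sqrt (w i) * a i) (fun i => Real.sqrt (w i) * b i)
  have e1 : ∀ i, (Real.sqrt (w i) * a i) * (Real.sqrt (w i) * b i)
      = w i * (a i * b i) := by
    intro i
    rw [show (Real.sqrt (w i) * a i) * (Real.sqrt (w i) * b i)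
        = (Real.sqrt (w i) * Real.sqrt (w i)) * (a i * b i) by ring,
      Real.mul_self_sqrt (hw i)]
  have e2 : ∀ i, (Real.sqrt (w i) * a i) ^ 2 = w i * a i ^ 2 := by
    intro i; rw [mul_pow, Real.sq_sqrt (hw i)]
  have e3 : ∀ i, (Real.sqrt (w i) * b i) ^ 2 = w i * b i ^ 2 := by
    intro i; rw [mul_pow, Real.sq_sqrt (hw i)]
  simp only [e1, e2, e3] at key
  exact key

open Matrix in
lemma ipF_expand {d : ℕ} (F : StdOpMonotone) (p : Fin d → ℝ)
    (X Y : Matrix (Fin d) (Fin d) ℂ) :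
    ipF F p X Y = ∑ k : Fin d, ∑ j : Fin d,
      ((p k * F.f (p j / p k) : ℝ) : ℂ) * ((starRingEnd ℂ) (X j k) * Y j k) := by
  unfold ipF Jsup
  rw [Matrix.trace]
  simp only [Matrix.diag_apply, Matrix.mul_apply, Matrix.conjTranspose_apply,
    Matrix.of_apply]
  congr 1; funext k; congr 1; funext j
  rw [show star (X j k) = (starRingEnd ℂ) (X j k) from rfl]; ring

open Matrix in
/-- Generalized Cramér–Rao inequality: for a smooth family of strictly positive
density matrices `ρ_s`, diagonal with eigenvalues `p` at time `t`, with
`f`-logarithmic derivative `L` (i.e. `𝕁^f_{ρ_t}(L) = ∂ρ_t/∂t`) and Hermitian `A`,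
`|d/ds Tr[A ρ_s]|_{s=t} ≤ √(J^f) √(V^f(A))` with `J^f = ⟨L,L⟩^f` and
`V^f(A) = ⟨A₀,A₀⟩^f`, `A₀ = A − Tr[Aρ_t]·I`. -/
theorem generalized_cramer_rao {d : ℕ} (F : StdOpMonotone)
    (ρ : ℝ → Matrix (Fin d) (Fin d) ℂ) (t : ℝ) (p : Fin d → ℝ)
    (hherm : ∀ s, (ρ s).IsHermitian) (hpos : ∀ s, (ρ s).PosDef)
    (htr : ∀ s, (ρ s).trace = 1)
    (hdiag : ρ t = Matrix.diagonal fun i => (p i : ℂ)) (hp : ∀ i, 0 < p i)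
    (ρ' : Matrix (Fin d) (Fin d) ℂ)
    (hsmooth : ∀ i j, HasDerivAt (fun s => ρ s i j) (ρ' i j) t)
    (L : Matrix (Fin d) (Fin d) ℂ) (hL : Jsup F p L = ρ')
    (A : Matrix (Fin d) (Fin d) ℂ) (hA : A.IsHermitian)
    (D : ℝ) (hD : HasDerivAt (fun s => ((A * ρ s).trace).re) D t) :
    |D| ≤ Real.sqrt ((ipF F p L L).re) *
      Real.sqrt ((ipF F p (A - ((A * ρ t).trace) • (1 : Matrix (Fin d) (Fin d) ℂ))
        (A - ((A * ρ t).trace) • (1 : Matrix (Fin d) (Fin d) ℂ))).re) := by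
  classical
  set c : ℂ := (A * ρ t).trace with hc
  set A₀ : Matrix (Fin d) (Fin d) ℂ := A - c • (1 : Matrix (Fin d) (Fin d) ℂ)
  -- Step 1: derivative of trace
  have htraceDeriv : HasDerivAt (fun s => (A * ρ s).trace) (A * ρ').trace t := by
    have : ∀ s, (A * ρ s).trace = ∑ k : Fin d, ∑ j : Fin d, A k j * ρ s j k := by
      intro s
      rw [Matrix.trace]
      simp [Matrix.mul_apply]
    simp only [this]
    rw [show (A * ρ').trace = ∑ k : Fin d, ∑ j : Fin d, A k j * ρ' j k by
      rw [Matrix.trace]; simp [Matrix.mul_apply]]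
    apply HasDerivAt.fun_sum; intro k _
    apply HasDerivAt.fun_sum; intro j _
    exact (hsmooth j k).const_mul (A k j)
  have hDval : D = ((A * ρ').trace).re := by
    have := (Complex.reCLM.hasFDerivAt.comp_hasDerivAt t htraceDeriv)
    exact hD.unique this
  -- Step 2: trace of ρ' is 0
  have htrρ' : ρ'.trace = 0 := by
    have h1 : HasDerivAt (fun s => (ρ s).trace) ρ'.trace t := by
      have : ∀ s, (ρ s).trace = ∑ i : Fin d, ρ s i i := fun s => rfl
      simp only [this]
      rw [show ρ'.trace = ∑ i : Fin d, ρ' i i from rfl]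
      exact HasDerivAt.fun_sum fun i _ => hsmooth i i
    have h2 : HasDerivAt (fun s : ℝ => (ρ s).trace) 0 t := by
      have : (fun s : ℝ => (ρ s).trace) = fun _ => (1 : ℂ) := funext htr
      rw [this]; exact hasDerivAt_const t 1
    exact h1.unique h2
  -- Step 3: D = Re (ipF A₀ L)
  have hip : ipF F p A₀ L = (A * ρ').trace := by
    unfold ipF
    rw [hL]
    have hA₀H : A₀ᴴ = A - (starRingEnd ℂ c) • (1 : Matrix (Fin d) (Fin d) ℂ) := by
      simp [A₀, Matrix.conjTranspose_smul, hA.eq]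
    rw [hA₀H, Matrix.sub_mul, Matrix.trace_sub, Matrix.smul_mul, Matrix.one_mul,
      Matrix.trace_smul, htrρ']
    simp
  -- weights
  set w : Fin d → Fin d → ℝ := fun j k => p k * F.f (p j / p k) with hw
  have hwpos : ∀ j k, 0 ≤ w j k := fun j k =>
    le_of_lt (mul_pos (hp k) (F.pos _ (div_pos (hp j) (hp k))))
  -- norms of inner products
  have hre : ∀ X : Matrix (Fin d) (Fin d) ℂ,
      (ipF F p X X).re = ∑ k : Fin d, ∑ j : Fin d, w j k * ‖X j k‖ ^ 2 := by
    intro X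
    rw [ipF_expand]
    rw [Complex.re_sum]
    congr 1; funext k
    rw [Complex.re_sum]
    congr 1; funext j
    rw [mul_comm ((starRingEnd ℂ) (X j k)) (X j k), Complex.mul_conj,
      ← Complex.ofReal_mul, Complex.ofReal_re, Complex.sq_norm]
  have habs : ‖ipF F p A₀ L‖ ≤
      ∑ k : Fin d, ∑ j : Fin d, w j k * (‖A₀ j k‖ * ‖L j k‖) := by
    rw [ipF_expand]
    refine le_trans (norm_sum_le _ _) ?_
    refine Finset.sum_le_sum fun k _ => ?_
    refine le_trans (norm_sum_le _ _) ?_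
    refine Finset.sum_le_sum fun j _ => ?_
    rw [norm_mul, norm_mul, Complex.norm_conj, Complex.norm_real, Real.norm_eq_abs,
      abs_of_nonneg (hwpos j k), mul_assoc]
  -- Cauchy–Schwarz
  have key : ∑ k : Fin d, ∑ j : Fin d, w j k * (‖A₀ j k‖ * ‖L j k‖)
      ≤ Real.sqrt ((ipF F p L L).re) * Real.sqrt ((ipF F p A₀ A₀).re) := by
    rw [hre, hre]
    have := cs_weighted (Finset.univ ×ˢ Finset.univ)
      (fun x : Fin d × Fin d => w x.2 x.1)
      (fun x : Fin d × Fin d => ‖A₀ x.2 x.1‖)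
      (fun x : Fin d × Fin d => ‖L x.2 x.1‖)
      (fun x => hwpos x.2 x.1) (fun x => norm_nonneg _)
      (fun x => norm_nonneg _)
    rw [Finset.sum_product, Finset.sum_product, Finset.sum_product] at this
    calc _ ≤ Real.sqrt (∑ k : Fin d, ∑ j : Fin d, w j k * ‖A₀ j k‖ ^ 2) *
        Real.sqrt (∑ k : Fin d, ∑ j : Fin d, w j k * ‖L j k‖ ^ 2) := this
      _ = _ := by rw [mul_comm]
  -- conclude
  have hDle : |D| ≤ ‖ipF F p A₀ L‖ := by
    rw [hDval, ← hip]
    exact Complex.abs_re_le_norm _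
  exact le_trans hDle (le_trans habs key)
end

section
/- Decomposition of the dissipator into a unitary part: let ρ = ∑_n p_n |n⟩⟨n| be a nondegenerate strictly positive density matrix and D a Hermitian-preserving linear map on matrices (with D[ρ] Hermitian). Define H_D := ∑_{m≠n} (iℏ ⟨m|D[ρ]|n⟩/(p_n − p_m)) |m⟩⟨n| and D_nd[ρ] := ∑_{m≠n} ⟨m|D[ρ]|n⟩ |m⟩⟨n|. Then H_D is Hermitian and D_nd[ρ] = −(i/ℏ)[H_D, ρ]. -/
open Matrix in
/-- Decomposition of the dissipator into a unitary part: for a nondegenerate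
strictly positive density matrix `ρ = diagonal p` (in its eigenbasis) and a
Hermitian matrix `Dρ = D[ρ]`, the operator
`H_D := ∑_{m≠n} iℏ ⟨m|D[ρ]|n⟩/(p_n − p_m) |m⟩⟨n|` is Hermitian and the
off-diagonal part `D_nd[ρ] = ∑_{m≠n} ⟨m|D[ρ]|n⟩|m⟩⟨n|` equals `−(i/ℏ)[H_D, ρ]`. -/
theorem dissipator_nondiag_as_commutator {d : ℕ} (p : Fin d → ℝ)
    (hp : ∀ i, 0 < p i) (hsum : ∑ i, p i = 1) (hnd : Function.Injective p)
    (Dρ : Matrix (Fin d) (Fin d) ℂ) (hDρ : Dρ.IsHermitian)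
    (ℏ : ℝ) (hℏ : 0 < ℏ) :
    (Matrix.of fun m n : Fin d =>
        if m = n then (0 : ℂ)
        else Complex.I * (ℏ : ℂ) * Dρ m n / ((p n : ℂ) - (p m : ℂ))).IsHermitian ∧
    (Matrix.of fun m n : Fin d => if m = n then (0 : ℂ) else Dρ m n) =
      (-(Complex.I / (ℏ : ℂ))) •
        ((Matrix.of fun m n : Fin d =>
            if m = n then (0 : ℂ)
            else Complex.I * (ℏ : ℂ) * Dρ m n / ((p n : ℂ) - (p m : ℂ))) *
          Matrix.diagonal (fun i => (p i : ℂ)) -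
         Matrix.diagonal (fun i => (p i : ℂ)) *
          (Matrix.of fun m n : Fin d =>
            if m = n then (0 : ℂ)
            else Complex.I * (ℏ : ℂ) * Dρ m n / ((p n : ℂ) - (p m : ℂ)))) := by
  have hℏ' : (ℏ : ℂ) ≠ 0 := Complex.ofReal_ne_zero.mpr hℏ.ne'
  constructor
  · ext m n
    simp only [Matrix.conjTranspose_apply, Matrix.of_apply]
    by_cases h : m = n
    · simp [h]
    · have h' : n ≠ m := fun e => h e.symm
      have hD : (starRingEnd ℂ) (Dρ n m) = Dρ m n := by
        have := hDρ
        rw [Matrix.IsHermitian] at this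
        have := congrFun (congrFun this m) n
        simpa [Matrix.conjTranspose_apply] using this
      have hmn : p m ≠ p n := fun e => h (hnd e)
      have hpne : (p m : ℂ) - (p n : ℂ) ≠ 0 := by
        rw [sub_ne_zero]; exact_mod_cast hmn
      have hpne2 : (p n : ℂ) - (p m : ℂ) ≠ 0 := by
        rw [sub_ne_zero]; exact_mod_cast hmn.symm
      simp only [Complex.star_def, if_neg h, if_neg h', map_div₀, _root_.map_mul, map_sub, Complex.conj_I,
        Complex.conj_ofReal, hD]
      field_simp
      ring
  · ext m n
    simp only [Matrix.smul_apply, Matrix.sub_apply, Matrix.mul_diagonal,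
      Matrix.diagonal_mul, Matrix.of_apply]
    by_cases h : m = n
    · simp [h]
    · have hmn : p m ≠ p n := fun e => h (hnd e)
      have hpne : (p n : ℂ) - (p m : ℂ) ≠ 0 := by
        rw [sub_ne_zero]; exact_mod_cast hmn.symm
      simp only [if_neg h]
      field_simp
      ring_nf
      simp only [Complex.I_sq]
      ring
      rw [mul_inv_cancel_right₀ hℏ']
end

section
/- Improved speed limit for states: under the same master-equation decomposition dρ_t/dt = −(i/ℏ)[H+H_D, ρ_t] + D_d[ρ_t], the trace-norm speed satisfies ‖dρ_t/dt‖_Tr ≤ (1/(2ℏ))√(F_{ρ_t}(H+H_D)) + √((1/2)·σ̇·M'), where M' := ∑_{ω,α,n≠m} f(W^{ω,α}_{mn}p_n, W^{−ω,α}_{nm}p_m) and ‖Y‖_Tr := (1/2)Tr√(Y†Y). -/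
open scoped ComplexOrder

/-- The logarithmic mean, with `logMean a a = a`. -/
noncomputable def logMean (a b : ℝ) : ℝ :=
  if a = b then a else (a - b) / (Real.log a - Real.log b)

/-- `Matrix.PosSemidef.sqrt` as it was defined in Mathlib (Dec 2024); removed since. -/
noncomputable def Matrix.PosSemidef.sqrt {n 𝕜 : Type*} [Fintype n] [RCLike 𝕜] [DecidableEq n]
    {A : Matrix n n 𝕜} (hA : A.PosSemidef) : Matrix n n 𝕜 :=
  hA.1.eigenvectorUnitary.1 * Matrix.diagonal ((↑) ∘ (√·) ∘ hA.1.eigenvalues) *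
    (star hA.1.eigenvectorUnitary : Matrix n n 𝕜)

/-!
Since `ρ'` is Hermitian, its trace norm equals `tr (U ρ')` for the unitary `U = sgn ρ'`.
Split `ρ'` into the commutator with `K = H + H_D` and the diagonal dissipator. In the eigenbasis
of `ρ` the first contributes `∑ U_mn K_nm (p_m - p_n) / ℏ`, and Cauchy–Schwarz with the weights
`p_m + p_n` bounds it by `√F / ℏ`, because the rows and columns of `U` are unit vectors.
Since `|U_mm| ≤ 1`, the second is at most `∑ |a - b|` over pairs `a, b` of mutually reversed
fluxes, and Cauchy–Schwarz applied to `|a - b| = √(L(a, b)) √((a - b)(log a - log b))`, with `L`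
the logarithmic mean, bounds it by `√(M' · 2σ̇)`, since the pairs symmetrize `σ̇`.
-/

open Matrix Finset

namespace Matrix

variable {n 𝕜 : Type*} [Fintype n]

lemma isHermitian_smul_commutator {K ρ : Matrix n n ℂ} (hK : K.IsHermitian)
    (hρ : ρ.IsHermitian) (r : ℝ) : ((-(Complex.I / r)) • (K * ρ - ρ * K)).IsHermitian := by
  have hc : star (-(Complex.I / r)) = Complex.I / r := by
    simp [Complex.conj_ofReal, neg_div]
  rw [IsHermitian, conjTranspose_smul, conjTranspose_sub, conjTranspose_mul, conjTranspose_mul,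
    hK.eq, hρ.eq, hc, ← neg_sub, smul_neg, neg_smul]

variable [DecidableEq n] [RCLike 𝕜] {A U : Matrix n n 𝕜}

lemma IsHermitian.trace_cfc (hA : A.IsHermitian) (f : ℝ → ℝ) :
    (cfc f A).trace = ∑ i, (f (hA.eigenvalues i) : 𝕜) := by
  rw [hA.cfc_eq, IsHermitian.cfc, Unitary.conjStarAlgAut_apply, trace_mul_cycle,
    Unitary.star_mul_self_of_mem hA.eigenvectorUnitary.2, Matrix.one_mul, trace_diagonal]
  rfl

lemma IsHermitian.sqrt_conjTranspose_mul_self (hA : A.IsHermitian) :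
    (posSemidef_conjTranspose_mul_self A).sqrt = cfc (fun x : ℝ => |x|) A := by
  have hsq : Aᴴ * A = cfc (fun x : ℝ => x * x) A := by
    rw [cfc_mul (fun x : ℝ => x) (fun x : ℝ => x) A, cfc_id' ℝ A, hA.eq]
  have hsqrt : (posSemidef_conjTranspose_mul_self A).sqrt = cfc Real.sqrt (Aᴴ * A) := by
    rw [(posSemidef_conjTranspose_mul_self A).1.cfc_eq]
    rfl
  rw [hsqrt, hsq, ← cfc_comp Real.sqrt (fun x : ℝ => x * x) A]
  simp only [Function.comp_def, Real.sqrt_mul_self_eq_abs]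

lemma IsHermitian.trace_sqrt_conjTranspose_mul_self (hA : A.IsHermitian) :
    (posSemidef_conjTranspose_mul_self A).sqrt.trace = ∑ i, ((|hA.eigenvalues i| : ℝ) : 𝕜) := by
  rw [hA.sqrt_conjTranspose_mul_self, hA.trace_cfc]

lemma IsHermitian.exists_unitary_trace_mul_eq_sum_abs_eigenvalues (hA : A.IsHermitian) :
    ∃ U ∈ unitaryGroup n 𝕜, (U * A).trace = ∑ i, ((|hA.eigenvalues i| : ℝ) : 𝕜) := by
  let sgn : ℝ → ℝ := fun x => if x < 0 then -1 else 1
  have hsgn : ContinuousOn sgn (spectrum ℝ A) := A.finite_real_spectrum.continuousOn _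
  refine ⟨cfc sgn A, (cfc_unitary_iff sgn A).2 fun x _ => ?_, ?_⟩
  · simp only [sgn]
    split_ifs <;> norm_num
  · have hmul : cfc sgn A * A = cfc (fun x : ℝ => |x|) A := by
      nth_rw 2 [← cfc_id' ℝ A]
      rw [← cfc_mul sgn (fun x : ℝ => x) A]
      refine cfc_congr fun x _ => ?_
      simp only [sgn]
      split_ifs with h
      · rw [abs_of_neg h]; ring
      · rw [abs_of_nonneg (not_lt.1 h)]; ring
    rw [hmul, hA.trace_cfc]

lemma sum_norm_sq_row_of_mem_unitaryGroup (hU : U ∈ unitaryGroup n 𝕜) (i : n) :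
    ∑ j, ‖U i j‖ ^ 2 = 1 := by
  have h : (U * Uᴴ) i i = 1 := by
    rw [← star_eq_conjTranspose, Unitary.mul_star_self_of_mem hU, one_apply_eq]
  simp only [mul_apply, conjTranspose_apply, RCLike.star_def, RCLike.mul_conj] at h
  exact_mod_cast h

lemma sum_norm_sq_col_of_mem_unitaryGroup (hU : U ∈ unitaryGroup n 𝕜) (j : n) :
    ∑ i, ‖U i j‖ ^ 2 = 1 := by
  simpa using sum_norm_sq_row_of_mem_unitaryGroup (Unitary.star_mem hU) j

lemma sum_sum_norm_sq_mul_add_of_mem_unitaryGroup (hU : U ∈ unitaryGroup n 𝕜) (p : n → ℝ) :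
    ∑ i, ∑ j, ‖U i j‖ ^ 2 * (p i + p j) = 2 * ∑ i, p i := by
  simp only [mul_add, sum_add_distrib]
  rw [sum_comm (f := fun i j => ‖U i j‖ ^ 2 * p j)]
  simp only [← sum_mul, sum_norm_sq_row_of_mem_unitaryGroup hU,
    sum_norm_sq_col_of_mem_unitaryGroup hU, one_mul]
  ring

lemma norm_trace_mul_diagonal_le (hU : U ∈ unitaryGroup n 𝕜) (v : n → 𝕜) :
    ‖(U * diagonal v).trace‖ ≤ ∑ i, ‖v i‖ := by
  simp only [trace, diag, mul_diagonal]
  refine (norm_sum_le _ _).trans (sum_le_sum fun i _ => ?_)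
  rw [norm_mul]
  exact mul_le_of_le_one_left (norm_nonneg _) (entry_norm_bound_of_unitary hU i i)

end Matrix

lemma norm_trace_mul_commutator_diagonal_le {d : ℕ} {p : Fin d → ℝ} (hp : ∀ i, 0 < p i)
    {U : Matrix (Fin d) (Fin d) ℂ} (hU : U ∈ unitaryGroup (Fin d) ℂ)
    (K : Matrix (Fin d) (Fin d) ℂ) :
    ‖(U * (K * diagonal (fun i => (p i : ℂ)) - diagonal (fun i => (p i : ℂ)) * K)).trace‖ ≤
      √((∑ i, p i) * sldFisher p K) := by
  set f : Fin d × Fin d → ℝ := fun q => ‖U q.1 q.2‖ ^ 2 * (p q.1 + p q.2)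
  set g : Fin d × Fin d → ℝ := fun q => ‖K q.2 q.1‖ ^ 2 * (p q.1 - p q.2) ^ 2 / (p q.1 + p q.2)
  have hpos : ∀ i j, 0 < p i + p j := fun i j => add_pos (hp i) (hp j)
  have hf0 : ∀ q, 0 ≤ f q := fun q => mul_nonneg (sq_nonneg _) (hpos _ _).le
  have hg0 : ∀ q, 0 ≤ g q := fun q => div_nonneg (by positivity) (hpos _ _).le
  have hterm : ∀ i j, ‖U i j * (K j i * p i - p j * K j i)‖ = √(f (i, j)) * √(g (i, j)) := by
    intro i j
    have hnorm : ‖U i j * (K j i * p i - p j * K j i)‖ = ‖U i j‖ * ‖K j i‖ * |p i - p j| := by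
      rw [show K j i * (p i : ℂ) - p j * K j i = K j i * ((p i - p j : ℝ) : ℂ) by push_cast; ring,
        norm_mul, norm_mul, Complex.norm_real, Real.norm_eq_abs, mul_assoc]
    have hprod : f (i, j) * g (i, j) = (‖U i j‖ * ‖K j i‖ * |p i - p j|) ^ 2 := by
      simp only [f, g, mul_pow, sq_abs]
      field_simp [(hpos i j).ne']
    rw [hnorm, ← Real.sqrt_mul (hf0 _), hprod, Real.sqrt_sq (by positivity)]
  have hf : ∑ q, f q = 2 * ∑ i, p i :=
    (Fintype.sum_prod_type' _).trans (sum_sum_norm_sq_mul_add_of_mem_unitaryGroup hU p)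
  have hg : ∑ q, g q = sldFisher p K / 2 := by
    rw [sldFisher, Fintype.sum_prod_type, sum_comm, sum_div]
    refine sum_congr rfl fun i _ => ?_
    rw [sum_div]
    refine sum_congr rfl fun j _ => ?_
    simp only [g, Complex.normSq_eq_norm_sq]
    ring
  calc ‖(U * (K * diagonal (fun i => (p i : ℂ)) - diagonal (fun i => (p i : ℂ)) * K)).trace‖
      ≤ ∑ i, ∑ j, ‖U i j * (K j i * p i - p j * K j i)‖ := by
        have hC : K * diagonal (fun i => (p i : ℂ)) - diagonal (fun i => (p i : ℂ)) * K =
            of fun j i => K j i * p i - p j * K j i := by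
          ext j i
          simp [mul_diagonal, diagonal_mul]
        simp only [hC, Matrix.trace, Matrix.diag, mul_apply, of_apply]
        exact (norm_sum_le _ _).trans (sum_le_sum fun i _ => norm_sum_le _ _)
    _ = ∑ q, √(f q) * √(g q) := by
        rw [Fintype.sum_prod_type]
        exact sum_congr rfl fun i _ => sum_congr rfl fun j _ => hterm i j
    _ ≤ √(∑ q, f q) * √(∑ q, g q) := Real.sum_sqrt_mul_sqrt_le _ hf0 hg0
    _ = √((∑ i, p i) * sldFisher p K) := by
        rw [hf, hg, ← Real.sqrt_mul (mul_nonneg zero_le_two (sum_nonneg fun i _ => (hp i).le))]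
        congr 1
        ring

section LogMean

open Real

variable {a b : ℝ}

lemma sub_mul_log_sub_log_pos (ha : 0 < a) (hb : 0 < b) (hab : a ≠ b) :
    0 < (a - b) * (log a - log b) := by
  rcases hab.lt_or_gt with h | h
  · exact mul_pos_of_neg_of_neg (sub_neg.2 h) (sub_neg.2 (log_lt_log ha h))
  · exact mul_pos (sub_pos.2 h) (sub_pos.2 (log_lt_log hb h))

lemma sub_mul_log_sub_log_nonneg (ha : 0 < a) (hb : 0 < b) : 0 ≤ (a - b) * (log a - log b) := by
  rcases eq_or_ne a b with rfl | hab
  · simp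
  · exact (sub_mul_log_sub_log_pos ha hb hab).le

lemma logMean_pos (ha : 0 < a) (hb : 0 < b) : 0 < logMean a b := by
  unfold logMean
  split_ifs with hab
  · exact ha
  · exact div_pos_iff.2 (mul_pos_iff.1 (sub_mul_log_sub_log_pos ha hb hab))

lemma logMean_mul_sub_mul_log_sub_log (ha : 0 < a) (hb : 0 < b) :
    logMean a b * ((a - b) * (log a - log b)) = (a - b) ^ 2 := by
  unfold logMean
  split_ifs with hab
  · simp [hab]
  · have hlog : log a - log b ≠ 0 :=
      right_ne_zero_of_mul (sub_mul_log_sub_log_pos ha hb hab).ne'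
    field_simp

lemma abs_sub_eq_sqrt_logMean_mul_sqrt (ha : 0 < a) (hb : 0 < b) :
    |a - b| = √(logMean a b) * √((a - b) * (log a - log b)) := by
  rw [← sqrt_mul (logMean_pos ha hb).le, logMean_mul_sub_mul_log_sub_log ha hb, sqrt_sq_eq_abs]

end LogMean

section Involution

open Real

variable {T : Type*} {s : Finset T} {g : T → T} {a : T → ℝ}

lemma two_mul_sum_mul_log_div_of_involutive (hg : g.Involutive) (hs : ∀ t ∈ s, g t ∈ s)
    (ha : ∀ t, 0 < a t) :
    2 * ∑ t ∈ s, a t * log (a t / a (g t)) =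
      ∑ t ∈ s, (a t - a (g t)) * (log (a t) - log (a (g t))) := by
  have hswap : ∑ t ∈ s, a t * log (a t / a (g t)) = ∑ t ∈ s, a (g t) * log (a (g t) / a t) :=
    sum_nbij' g g hs hs (fun t _ => hg t) (fun t _ => hg t) (fun t _ => by rw [hg t])
  rw [two_mul]
  nth_rw 2 [hswap]
  rw [← sum_add_distrib]
  refine sum_congr rfl fun t _ => ?_
  rw [log_div (ha t).ne' (ha (g t)).ne', log_div (ha (g t)).ne' (ha t).ne']
  ring

lemma sum_abs_sub_le_of_involutive (hg : g.Involutive) (hs : ∀ t ∈ s, g t ∈ s)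
    (ha : ∀ t, 0 < a t) :
    ∑ t ∈ s, |a t - a (g t)| ≤
      √(∑ t ∈ s, logMean (a t) (a (g t))) * √(2 * ∑ t ∈ s, a t * log (a t / a (g t))) := by
  rw [two_mul_sum_mul_log_div_of_involutive hg hs ha]
  simp only [abs_sub_eq_sqrt_logMean_mul_sqrt (ha _) (ha _)]
  exact sum_sqrt_mul_sqrt_le _ (fun t => (logMean_pos (ha t) (ha (g t))).le)
    (fun t => sub_mul_log_sub_log_nonneg (ha t) (ha (g t)))

end Involution

section Rates

open Real

variable {J α : Type*} (ι : J → J) (W : J → α → α → ℝ) (p : α → ℝ)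

/-- The flux `W j m n * p n` of the jump `n → m` in channel `j`, indexed by `t = (j, n, m)`. -/
def flux (t : J × α × α) : ℝ := W t.1 t.2.2 t.2.1 * p t.2.1

def reverseJump (t : J × α × α) : J × α × α := (ι t.1, t.2.2, t.2.1)

variable {ι} in
lemma reverseJump_involutive (hι : ι.Involutive) : (reverseJump ι : J × α × α → _).Involutive :=
  fun t => by simp [reverseJump, hι t.1]

variable [Fintype J] [Fintype α] [DecidableEq α]

def netFlux (m : α) : ℝ :=
  ∑ j, ∑ n, if n = m then 0 else (W j m n * p n - W (ι j) n m * p m)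

noncomputable def entropyProduction : ℝ :=
  ∑ j, ∑ n, ∑ m, if m = n then 0 else W j m n * p n * log (W j m n * p n / (W (ι j) n m * p m))

noncomputable def logMeanActivity : ℝ :=
  ∑ j, ∑ n, ∑ m, if n = m then 0 else logMean (W j m n * p n) (W (ι j) n m * p m)

variable {ι W p}

lemma sum_ite_eq_sum_filter_ne (F : J × α × α → ℝ) :
    ∑ j, ∑ n, ∑ m, (if n = m then 0 else F (j, n, m)) =
      ∑ t : J × α × α with t.2.1 ≠ t.2.2, F t := by
  simp only [sum_filter, ite_not, Fintype.sum_prod_type]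

lemma entropyProduction_eq_sum :
    entropyProduction ι W p = ∑ t : J × α × α with t.2.1 ≠ t.2.2,
      flux W p t * log (flux W p t / flux W p (reverseJump ι t)) := by
  rw [← sum_ite_eq_sum_filter_ne, entropyProduction]
  simp only [eq_comm (a := (_ : α))]
  rfl

lemma logMeanActivity_eq_sum :
    logMeanActivity ι W p = ∑ t : J × α × α with t.2.1 ≠ t.2.2,
      logMean (flux W p t) (flux W p (reverseJump ι t)) := by
  rw [← sum_ite_eq_sum_filter_ne]
  rfl

lemma sum_abs_netFlux_le_sum_abs_sub :
    ∑ m, |netFlux ι W p m| ≤ ∑ t : J × α × α with t.2.1 ≠ t.2.2,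
      |flux W p t - flux W p (reverseJump ι t)| := by
  rw [← sum_ite_eq_sum_filter_ne]
  calc ∑ m, |netFlux ι W p m|
      ≤ ∑ m, ∑ j, ∑ n, if n = m then 0 else |W j m n * p n - W (ι j) n m * p m| := by
        refine sum_le_sum fun m _ => (abs_sum_le_sum_abs _ _).trans (sum_le_sum fun j _ => ?_)
        refine (abs_sum_le_sum_abs _ _).trans (sum_le_sum fun n _ => ?_)
        split_ifs <;> simp
    _ = _ := by
        rw [sum_comm]
        exact sum_congr rfl fun j _ => sum_comm

lemma logMeanActivity_nonneg (hW : ∀ j m n, 0 < W j m n) (hp : ∀ i, 0 < p i) :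
    0 ≤ logMeanActivity ι W p := by
  rw [logMeanActivity_eq_sum]
  exact sum_nonneg fun t _ => (logMean_pos (mul_pos (hW _ _ _) (hp _))
    (mul_pos (hW _ _ _) (hp _))).le

lemma sum_abs_netFlux_le (hι : ι.Involutive) (hW : ∀ j m n, 0 < W j m n)
    (hp : ∀ i, 0 < p i) :
    ∑ m, |netFlux ι W p m| ≤ √(logMeanActivity ι W p) * √(2 * entropyProduction ι W p) := by
  rw [logMeanActivity_eq_sum, entropyProduction_eq_sum]
  refine sum_abs_netFlux_le_sum_abs_sub.trans (sum_abs_sub_le_of_involutive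
    (reverseJump_involutive hι) (fun t ht => ?_) (fun t => mul_pos (hW _ _ _) (hp _)))
  simpa [reverseJump, eq_comm] using ht

end Rates

open Matrix in
theorem improved_state_speed_limit_general {d : ℕ} (p : Fin d → ℝ)
    (hp : ∀ i, 0 < p i) (hsum : ∑ i, p i = 1)
    (J : Type) [Fintype J] (ι : J → J) (hι : ∀ j, ι (ι j) = j)
    (W : J → Fin d → Fin d → ℝ) (hW : ∀ j m n, 0 < W j m n)
    (H HD : Matrix (Fin d) (Fin d) ℂ)
    (hH : H.IsHermitian) (hHD : HD.IsHermitian)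
    (ℏ : ℝ) (hℏ : 0 < ℏ) :
    let ρ : Matrix (Fin d) (Fin d) ℂ := Matrix.diagonal fun n => (p n : ℂ)
    let Dd : Matrix (Fin d) (Fin d) ℂ := Matrix.diagonal fun m =>
      ((∑ j, ∑ n, if n = m then 0 else (W j m n * p n - W (ι j) n m * p m) : ℝ) : ℂ)
    let ρ' : Matrix (Fin d) (Fin d) ℂ :=
      (-(Complex.I / (ℏ : ℂ))) • ((H + HD) * ρ - ρ * (H + HD)) + Dd
    let σdot : ℝ := ∑ j, ∑ n, ∑ m,
      if m = n then 0
      else W j m n * p n * Real.log (W j m n * p n / (W (ι j) n m * p m))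
    let M' : ℝ := ∑ j, ∑ n, ∑ m,
      if n = m then 0 else logMean (W j m n * p n) (W (ι j) n m * p m)
    (1 / 2) * (((Matrix.posSemidef_conjTranspose_mul_self ρ').sqrt).trace).re ≤
      (1 / (2 * ℏ)) * Real.sqrt (sldFisher p (H + HD)) +
        Real.sqrt ((1 / 2) * σdot * M') := by
  intro ρ Dd ρ' σdot M'
  have hρ : ρ.IsHermitian :=
    isHermitian_diagonal_of_self_adjoint _ (funext fun _ => Complex.conj_ofReal _)
  have hρ' : ρ'.IsHermitian := (isHermitian_smul_commutator (hH.add hHD) hρ ℏ).add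
    (isHermitian_diagonal_of_self_adjoint _ (funext fun _ => Complex.conj_ofReal _))
  obtain ⟨U, hU, htr⟩ := hρ'.exists_unitary_trace_mul_eq_sum_abs_eigenvalues
  have hhamiltonian : ‖(U * ((-(Complex.I / ℏ)) • ((H + HD) * ρ - ρ * (H + HD)))).trace‖ ≤
      √(sldFisher p (H + HD)) / ℏ := by
    have h := norm_trace_mul_commutator_diagonal_le hp hU (H + HD)
    rw [hsum, one_mul] at h
    rw [mul_smul_comm, trace_smul, norm_smul, norm_neg, norm_div, Complex.norm_I,
      Complex.norm_real, Real.norm_eq_abs, abs_of_pos hℏ, one_div_mul_eq_div]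
    exact div_le_div_of_nonneg_right h hℏ.le
  have hdissipative : ‖(U * Dd).trace‖ ≤ √M' * √(2 * σdot) := by
    refine (norm_trace_mul_diagonal_le hU fun m => (netFlux ι W p m : ℂ)).trans ?_
    simp only [Complex.norm_real, Real.norm_eq_abs]
    exact sum_abs_netFlux_le hι hW hp
  have hM' : 0 ≤ M' := logMeanActivity_nonneg hW hp
  have hsqrt : √M' * √(2 * σdot) = 2 * √((1 / 2) * σdot * M') := by
    rw [← Real.sqrt_mul hM',
      show M' * (2 * σdot) = 2 ^ 2 * ((1 / 2) * σdot * M') by ring,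
      Real.sqrt_mul (by norm_num), Real.sqrt_sq (by norm_num)]
  rw [hρ'.trace_sqrt_conjTranspose_mul_self, ← htr, mul_add, trace_add]
  calc 1 / 2 * (_ + (U * Dd).trace).re
      ≤ 1 / 2 * (√(sldFisher p (H + HD)) / ℏ + √M' * √(2 * σdot)) := by
        gcongr
        exact (Complex.re_le_norm _).trans
          ((norm_add_le _ _).trans (add_le_add hhamiltonian hdissipative))
    _ = _ := by
        rw [hsqrt]
        ring

open Matrix in
/-- Improved speed limit for states: with the master-equation decomposition
`dρ_t/dt = −(i/ℏ)[H+H_D,ρ_t] + D_d[ρ_t]` (same setup as the current speed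
limit, in the eigenbasis `ρ_t = diagonal p`), the trace-norm speed
`‖dρ_t/dt‖_Tr = (1/2)Tr√((dρ_t/dt)†(dρ_t/dt))` satisfies
`‖dρ_t/dt‖_Tr ≤ (1/(2ℏ))√(F_{ρ_t}(H+H_D)) + √(σ̇ M'/2)`. -/
theorem improved_state_speed_limit {d : ℕ} (p : Fin d → ℝ)
    (hp : ∀ i, 0 < p i) (hsum : ∑ i, p i = 1) (hnd : Function.Injective p)
    (J : Type) [Fintype J] (ι : J → J) (hι : ∀ j, ι (ι j) = j)
    (W : J → Fin d → Fin d → ℝ) (hW : ∀ j m n, 0 < W j m n)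
    (H HD : Matrix (Fin d) (Fin d) ℂ)
    (hH : H.IsHermitian) (hHD : HD.IsHermitian)
    (ℏ : ℝ) (hℏ : 0 < ℏ) :
    let ρ : Matrix (Fin d) (Fin d) ℂ := Matrix.diagonal fun n => (p n : ℂ)
    let Dd : Matrix (Fin d) (Fin d) ℂ := Matrix.diagonal fun m =>
      ((∑ j, ∑ n, if n = m then 0 else (W j m n * p n - W (ι j) n m * p m) : ℝ) : ℂ)
    let ρ' : Matrix (Fin d) (Fin d) ℂ :=
      (-(Complex.I / (ℏ : ℂ))) • ((H + HD) * ρ - ρ * (H + HD)) + Dd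
    let σdot : ℝ := ∑ j, ∑ n, ∑ m,
      if m = n then 0
      else W j m n * p n * Real.log (W j m n * p n / (W (ι j) n m * p m))
    let M' : ℝ := ∑ j, ∑ n, ∑ m,
      if n = m then 0 else logMean (W j m n * p n) (W (ι j) n m * p m)
    (1 / 2) * (((Matrix.posSemidef_conjTranspose_mul_self ρ').sqrt).trace).re ≤
      (1 / (2 * ℏ)) * Real.sqrt (sldFisher p (H + HD)) +
        Real.sqrt ((1 / 2) * σdot * M') :=
  improved_state_speed_limit_general p hp hsum J ι hι W hW H HD hH hHD ℏ hℏ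
end
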